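/- arXiv:math/0104088 — 2 statements merged into one kernel-verified Lean document; each statement's English description precedes it below -/
import Mathlib

section
/- The convex hull of a compact subset $C$ of $\mathbb{H}^3$ equals the union of all geodesic tetrahedra (possibly degenerate) having all four vertices in $C$. -/
noncomputable section

/-- Inverse hyperbolic cosine. -/
def arcosh (x : ℝ) : ℝ := Real.log (x + Real.sqrt (x ^ 2 - 1))

/-- The Minkowski bilinear form of signature (3,1) on `ℝ⁴`. -/
def mB (x y : Fin 4 → ℝ) : ℝ := x 0 * y 0 + x 1 * y 1 + x 2 * y 2 - x 3 * y 3

/-- The hyperboloid model of hyperbolic 3-space `ℍ³`. -/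
def H3 : Set (Fin 4 → ℝ) := {x | mB x x = -1 ∧ 0 < x 3}

/-- Radial projection onto the hyperboloid. -/
def hproj (p : Fin 4 → ℝ) : Fin 4 → ℝ := (Real.sqrt (-(mB p p)))⁻¹ • p

/-- The geodesic segment between two points of `ℍ³`, obtained as the radial
projection of the Euclidean segment. -/
def hseg (a b : Fin 4 → ℝ) : Set (Fin 4 → ℝ) := hproj '' segment ℝ a b

/-- Hyperbolic distance between points of the hyperboloid. -/
def hdist (x y : Fin 4 → ℝ) : ℝ := arcosh (-(mB x y))

/-- Hyperbolic distance from a point to a set. -/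
def hinfDist (x : Fin 4 → ℝ) (s : Set (Fin 4 → ℝ)) : ℝ := sInf (hdist x '' s)

/-- A subset of `ℍ³` is (hyperbolically) convex if it contains the geodesic
segment between any two of its points. -/
def HConvex (A : Set (Fin 4 → ℝ)) : Prop :=
  ∀ ⦃x⦄, x ∈ A → ∀ ⦃y⦄, y ∈ A → hseg x y ⊆ A

/-- The convex hull of a subset of `ℍ³`: the smallest convex subset of `ℍ³`
containing it. -/
def hConvexHull (S : Set (Fin 4 → ℝ)) : Set (Fin 4 → ℝ) :=
  ⋂₀ {A | S ⊆ A ∧ A ⊆ H3 ∧ HConvex A}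

/-- The closed convex hull of a subset of `ℍ³`: the smallest closed convex
subset of `ℍ³` containing it. -/
def hClosedHull (S : Set (Fin 4 → ℝ)) : Set (Fin 4 → ℝ) :=
  ⋂₀ {A | S ⊆ A ∧ A ⊆ H3 ∧ HConvex A ∧ IsClosed A}

lemma mB_self_smul (c : ℝ) (p : Fin 4 → ℝ) : mB (c • p) (c • p) = c ^ 2 * mB p p := by
  simp [mB, Pi.smul_apply, smul_eq_mul]; ring

lemma hproj_smul {c : ℝ} (hc : 0 < c) (p : Fin 4 → ℝ) : hproj (c • p) = hproj p := by
  unfold hproj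
  rw [mB_self_smul, show -(c ^ 2 * mB p p) = c ^ 2 * (-(mB p p)) by ring,
    Real.sqrt_mul (sq_nonneg c), Real.sqrt_sq hc.le, mul_inv, smul_smul]
  rw [mul_comm c⁻¹ _, mul_assoc, inv_mul_cancel₀ hc.ne', mul_one]

lemma mem_D_of_H3 {x : Fin 4 → ℝ} (hx : x ∈ H3) : mB x x ≤ -1 ∧ 1 ≤ x 3 := by
  obtain ⟨h1, h2⟩ := hx
  refine ⟨h1.le, ?_⟩
  unfold mB at h1
  nlinarith [sq_nonneg (x 0), sq_nonneg (x 1), sq_nonneg (x 2)]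

lemma aux_cs (a0 a1 a2 b0 b1 b2 : ℝ) :
    (a0*b0+a1*b1+a2*b2)^2 ≤ (a0^2+a1^2+a2^2)*(b0^2+b1^2+b2^2) := by
  nlinarith [sq_nonneg (a0*b1 - a1*b0), sq_nonneg (a0*b2 - a2*b0), sq_nonneg (a1*b2 - a2*b1)]

lemma aux_rcs (a0 a1 a2 a3 b0 b1 b2 b3 : ℝ)
    (hx : a0*a0+a1*a1+a2*a2 - a3*a3 ≤ -1) (hy : b0*b0+b1*b1+b2*b2 - b3*b3 ≤ -1)
    (hx3 : 0 < a3) (hy3 : 0 < b3) : a0*b0+a1*b1+a2*b2 - a3*b3 ≤ -1 := by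
  have hcs := aux_cs a0 a1 a2 b0 b1 b2
  have hAx : 1 + (a0^2+a1^2+a2^2) ≤ a3^2 := by nlinarith
  have hBy : 1 + (b0^2+b1^2+b2^2) ≤ b3^2 := by nlinarith
  by_cases h : 1 + (a0*b0+a1*b1+a2*b2) ≤ 0
  · nlinarith [mul_pos hx3 hy3]
  push_neg at h
  have h2 : (1 + (a0*b0+a1*b1+a2*b2))^2 ≤ (1+(a0^2+a1^2+a2^2)) * (1+(b0^2+b1^2+b2^2)) := by
    nlinarith [hcs, sq_nonneg (a0 - b0), sq_nonneg (a1 - b1), sq_nonneg (a2 - b2)]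
  have h3 : (1+(a0^2+a1^2+a2^2)) * (1+(b0^2+b1^2+b2^2)) ≤ (a3 * b3)^2 := by
    calc (1+(a0^2+a1^2+a2^2)) * (1+(b0^2+b1^2+b2^2)) ≤ a3^2 * b3^2 :=
          mul_le_mul hAx hBy (by positivity) (sq_nonneg _)
      _ = (a3*b3)^2 := by ring
  nlinarith [mul_pos hx3 hy3, h2, h3]

lemma mB_le_neg_one {x y : Fin 4 → ℝ} (hx : mB x x ≤ -1) (hy : mB y y ≤ -1)
    (hx3 : 0 < x 3) (hy3 : 0 < y 3) : mB x y ≤ -1 :=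
  aux_rcs (x 0) (x 1) (x 2) (x 3) (y 0) (y 1) (y 2) (y 3) hx hy hx3 hy3

lemma mB_add_smul (a b : ℝ) (p q : Fin 4 → ℝ) :
    mB (a • p + b • q) (a • p + b • q)
      = a^2 * mB p p + 2*a*b * mB p q + b^2 * mB q q := by
  simp [mB, Pi.add_apply, Pi.smul_apply, smul_eq_mul]; ring

lemma combo_mem_D {p q : Fin 4 → ℝ} (hp : mB p p ≤ -1 ∧ 1 ≤ p 3)
    (hq : mB q q ≤ -1 ∧ 1 ≤ q 3) {a b : ℝ} (ha : 0 ≤ a) (hb : 0 ≤ b) (hab : a + b = 1) :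
    mB (a • p + b • q) (a • p + b • q) ≤ -1 ∧ 1 ≤ (a • p + b • q) 3 := by
  have hpq : mB p q ≤ -1 :=
    mB_le_neg_one hp.1 hq.1 (by linarith [hp.2]) (by linarith [hq.2])
  constructor
  · rw [mB_add_smul]
    have h1 : a^2 * (mB p p + 1) ≤ 0 :=
      mul_nonpos_of_nonneg_of_nonpos (sq_nonneg a) (by linarith [hp.1])
    have h2 : b^2 * (mB q q + 1) ≤ 0 :=
      mul_nonpos_of_nonneg_of_nonpos (sq_nonneg b) (by linarith [hq.1])
    have h3 : (a*b) * (mB p q + 1) ≤ 0 :=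
      mul_nonpos_of_nonneg_of_nonpos (mul_nonneg ha hb) (by linarith)
    have h4 : (a+b)^2 = 1 := by rw [hab]; norm_num
    nlinarith [h1, h2, h3, h4]
  · have : (a • p + b • q) 3 = a * p 3 + b * q 3 := by
      simp [Pi.add_apply, Pi.smul_apply, smul_eq_mul]
    rw [this]
    nlinarith [hp.2, hq.2]

lemma eq_smul_hproj {p : Fin 4 → ℝ} (hp : mB p p ≤ -1) :
    p = Real.sqrt (-(mB p p)) • hproj p ∧ 1 ≤ Real.sqrt (-(mB p p)) := by
  have h0 : (1:ℝ) ≤ -(mB p p) := by linarith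
  have ht : 1 ≤ Real.sqrt (-(mB p p)) := by
    rw [show (1:ℝ) = Real.sqrt 1 by simp]
    exact Real.sqrt_le_sqrt h0
  refine ⟨?_, ht⟩
  unfold hproj
  rw [smul_smul, mul_inv_cancel₀ (by linarith : Real.sqrt (-(mB p p)) ≠ 0), one_smul]

lemma hproj_mem_H3 {p : Fin 4 → ℝ} (hp : mB p p ≤ -1) (hp3 : 0 < p 3) : hproj p ∈ H3 := by
  have h0 : (0:ℝ) < -(mB p p) := by linarith
  have ht : 0 < Real.sqrt (-(mB p p)) := Real.sqrt_pos.2 h0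
  have ht2 : Real.sqrt (-(mB p p)) ^ 2 = -(mB p p) := Real.sq_sqrt h0.le
  constructor
  · show mB ((Real.sqrt (-(mB p p)))⁻¹ • p) ((Real.sqrt (-(mB p p)))⁻¹ • p) = -1
    rw [mB_self_smul, inv_pow, ht2]
    have hne : mB p p ≠ 0 := by linarith
    field_simp
  · show 0 < ((Real.sqrt (-(mB p p)))⁻¹ • p) 3
    have : ((Real.sqrt (-(mB p p)))⁻¹ • p) 3 = (Real.sqrt (-(mB p p)))⁻¹ * p 3 := by
      simp [Pi.smul_apply, smul_eq_mul]
    rw [this]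
    exact mul_pos (inv_pos.2 ht) hp3

lemma hproj_eq_self {x : Fin 4 → ℝ} (hx : x ∈ H3) : hproj x = x := by
  unfold hproj
  rw [hx.1]
  norm_num

lemma hproj_combo {p q : Fin 4 → ℝ} {c d : ℝ} (hc : 0 ≤ c) (hd : 0 ≤ d) (hcd : 0 < c + d) :
    ∃ w ∈ segment ℝ p q, (c + d) • w = c • p + d • q ∧ hproj (c • p + d • q) = hproj w := by
  refine ⟨(c/(c+d)) • p + (d/(c+d)) • q,
    ⟨c/(c+d), d/(c+d), div_nonneg hc hcd.le, div_nonneg hd hcd.le, by field_simp, rfl⟩, ?_, ?_⟩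
  · rw [smul_add, smul_smul, smul_smul]
    congr 1 <;> · congr 1; field_simp
  · have he : (c + d) • ((c/(c+d)) • p + (d/(c+d)) • q) = c • p + d • q := by
      rw [smul_add, smul_smul, smul_smul]
      congr 1 <;> · congr 1; field_simp
    rw [← he, hproj_smul hcd]

lemma sum_pos_aux {a b c d : ℝ} (ha : 0 ≤ a) (hb : 0 ≤ b) (hab : a + b = 1)
    (hc : 0 < c) (hd : 0 < d) : 0 < a * c + b * d := by
  rcases eq_or_lt_of_le ha with h | h
  · have hb1 : b = 1 := by linarith
    rw [← h, zero_mul, hb1, one_mul, zero_add]; exact hd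
  · have h1 : 0 < a * c := mul_pos h hc
    have h2 : 0 ≤ b * d := mul_nonneg hb hd.le
    linarith

lemma convexHull_subset_D {S : Set (Fin 4 → ℝ)} (hS : S ⊆ H3) :
    ∀ p ∈ convexHull ℝ S, mB p p ≤ -1 ∧ 1 ≤ p 3 := by
  intro p hp
  refine convexHull_min (fun x hx => mem_D_of_H3 (hS hx)) ?_ hp
  intro x hx y hy a b ha hb hab
  exact combo_mem_D hx hy ha hb hab

lemma hConvexHull_eq_image {S : Set (Fin 4 → ℝ)} (hS : S ⊆ H3) :
    hConvexHull S = hproj '' convexHull ℝ S := by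
  have hD := convexHull_subset_D hS
  have hT1 : S ⊆ hproj '' convexHull ℝ S := fun s hs =>
    ⟨s, subset_convexHull ℝ S hs, hproj_eq_self (hS hs)⟩
  have hT2 : hproj '' convexHull ℝ S ⊆ H3 := by
    rintro _ ⟨p, hp, rfl⟩
    exact hproj_mem_H3 (hD p hp).1 (by linarith [(hD p hp).2])
  have hT3 : HConvex (hproj '' convexHull ℝ S) := by
    rintro _ ⟨p, hp, rfl⟩ _ ⟨q, hq, rfl⟩ z hz
    obtain ⟨u, hu, rfl⟩ := hz
    obtain ⟨a, b, ha, hb, hab, rfl⟩ := hu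
    have htp0 : (0:ℝ) < Real.sqrt (-(mB p p)) := by linarith [(eq_smul_hproj (hD p hp).1).2]
    have htq0 : (0:ℝ) < Real.sqrt (-(mB q q)) := by linarith [(eq_smul_hproj (hD q hq).1).2]
    have hz' : a • hproj p + b • hproj q
        = (a * (Real.sqrt (-(mB p p)))⁻¹) • p + (b * (Real.sqrt (-(mB q q)))⁻¹) • q := by
      unfold hproj; rw [smul_smul, smul_smul]
    have hcd : 0 < a * (Real.sqrt (-(mB p p)))⁻¹ + b * (Real.sqrt (-(mB q q)))⁻¹ :=
      sum_pos_aux ha hb hab (inv_pos.2 htp0) (inv_pos.2 htq0)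
    obtain ⟨w, hw, -, hwe⟩ := hproj_combo (p := p) (q := q)
      (mul_nonneg ha (inv_pos.2 htp0).le) (mul_nonneg hb (inv_pos.2 htq0).le) hcd
    rw [hz', hwe]
    exact ⟨w, (convex_convexHull ℝ S).segment_subset hp hq hw, rfl⟩
  apply Set.Subset.antisymm
  · exact Set.sInter_subset_of_mem ⟨hT1, hT2, hT3⟩
  · rintro _ ⟨p, hp, rfl⟩ A hA
    obtain ⟨hSA, hAH3, hAconv⟩ := hA
    have hK : convexHull ℝ S ⊆ {r : Fin 4 → ℝ | ∃ c : ℝ, 0 < c ∧ ∃ x ∈ A, r = c • x} := by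
      apply convexHull_min
      · exact fun s hs => ⟨1, one_pos, s, hSA hs, (one_smul ℝ s).symm⟩
      · rintro _ ⟨c, hc, x, hxA, rfl⟩ _ ⟨d, hd, y, hyA, rfl⟩ a b ha hb hab
        have hrw : a • (c • x) + b • (d • y) = (a*c) • x + (b*d) • y := by
          rw [smul_smul, smul_smul]
        have hsum : 0 < a*c + b*d := sum_pos_aux ha hb hab hc hd
        obtain ⟨w, hw, hwe1, hwe2⟩ := hproj_combo (p := x) (q := y)
          (mul_nonneg ha hc.le) (mul_nonneg hb hd.le) hsum
        obtain ⟨aw, bw, haw, hbw, habw, rfl⟩ := hw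
        have hwD := combo_mem_D (mem_D_of_H3 (hAH3 hxA)) (mem_D_of_H3 (hAH3 hyA)) haw hbw habw
        obtain ⟨hwe3, hwt⟩ := eq_smul_hproj hwD.1
        have hwA : hproj (aw • x + bw • y) ∈ A :=
          hAconv hxA hyA ⟨aw • x + bw • y, ⟨aw, bw, haw, hbw, habw, rfl⟩, rfl⟩
        refine Set.mem_setOf_eq ▸
          ⟨(a*c + b*d) * Real.sqrt (-(mB (aw • x + bw • y) (aw • x + bw • y))),
            mul_pos hsum (by linarith), hproj (aw • x + bw • y), hwA, ?_⟩
        rw [hrw, ← hwe1, mul_smul, ← hwe3]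
    obtain ⟨c, hc, x, hxA, he⟩ := hK hp
    rw [he, hproj_smul hc, hproj_eq_self (hAH3 hxA)]
    exact hxA

lemma conic_reduce (t : Finset (Fin 4 → ℝ)) :
    ∀ a : (Fin 4 → ℝ) → ℝ, (∀ i ∈ t, 0 ≤ a i) →
    ∃ t' : Finset (Fin 4 → ℝ), t' ⊆ t ∧ t'.card ≤ 4 ∧ ∃ b : (Fin 4 → ℝ) → ℝ,
      (∀ i ∈ t', 0 ≤ b i) ∧ ∑ i ∈ t', b i • i = ∑ i ∈ t, a i • i := by
  classical
  induction t using Finset.strongInduction with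
  | _ t ih =>
    intro a ha
    by_cases hcard : t.card ≤ 4
    · exact ⟨t, le_refl _, hcard, a, ha, rfl⟩
    push_neg at hcard
    have hlt : Module.finrank ℝ (Fin 4 → ℝ) < t.card := by
      rw [Module.finrank_fin_fun]; exact hcard
    obtain ⟨f, hfsum, x, hxt, hfx⟩ := Module.exists_nontrivial_relation_of_finrank_lt_card hlt
    obtain ⟨g, hgsum, x₀, hx₀t, hgx₀⟩ :
        ∃ g : (Fin 4 → ℝ) → ℝ, ∑ e ∈ t, g e • e = 0 ∧ ∃ y ∈ t, 0 < g y := by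
      rcases lt_or_gt_of_ne hfx with h | h
      · refine ⟨fun z => -(f z), ?_, x, hxt, by simpa using h⟩
        simp only [neg_smul, Finset.sum_neg_distrib, hfsum, neg_zero]
      · exact ⟨f, hfsum, x, hxt, h⟩
    obtain ⟨i₀, hi₀s, hmin⟩ := Finset.exists_min_image (t.filter (fun z => 0 < g z))
      (fun z => a z / g z) ⟨x₀, Finset.mem_filter.2 ⟨hx₀t, hgx₀⟩⟩
    have hgi₀ : 0 < g i₀ := (Finset.mem_filter.1 hi₀s).2
    have hi₀t : i₀ ∈ t := (Finset.mem_filter.1 hi₀s).1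
    have hlam0 : 0 ≤ a i₀ / g i₀ := div_nonneg (ha i₀ hi₀t) hgi₀.le
    set b := fun z => a z - (a i₀ / g i₀) * g z with hb
    have hbnn : ∀ i ∈ t, 0 ≤ b i := by
      intro i hit
      by_cases hgi : 0 < g i
      · have hle := hmin i (Finset.mem_filter.2 ⟨hit, hgi⟩)
        simp only [hb, sub_nonneg]
        exact (le_div_iff₀ hgi).1 hle
      · push_neg at hgi
        have h1 : (a i₀ / g i₀) * g i ≤ 0 := mul_nonpos_of_nonneg_of_nonpos hlam0 hgi
        have h2 := ha i hit
        simp only [hb]; linarith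
    have hbi₀ : b i₀ = 0 := by
      simp only [hb]
      field_simp
      ring
    have hbsum : ∑ i ∈ t.erase i₀, b i • i = ∑ i ∈ t, a i • i := by
      rw [Finset.sum_erase _ (by rw [hbi₀, zero_smul])]
      have hcong : ∀ i ∈ t, b i • i = a i • i - (a i₀ / g i₀) • (g i • i) := by
        intro i _
        simp only [hb, sub_smul, smul_smul]
      rw [Finset.sum_congr rfl hcong, Finset.sum_sub_distrib, ← Finset.smul_sum, hgsum,
        smul_zero, sub_zero]
    obtain ⟨t', ht'sub, ht'card, b', hb'nn, hb'sum⟩ :=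
      ih (t.erase i₀) (Finset.erase_ssubset hi₀t) b
        (fun i hi => hbnn i (Finset.mem_of_mem_erase hi))
    exact ⟨t', ht'sub.trans (Finset.erase_subset _ _), ht'card, b', hb'nn,
      by rw [hb'sum, hbsum]⟩

/-- The convex hull of a compact subset `C` of `ℍ³` equals the
union of all geodesic tetrahedra (possibly degenerate) having all four vertices
in `C`. -/
theorem hConvexHull_eq_iUnion_tetrahedra (C : Set (Fin 4 → ℝ))
    (hcpt : IsCompact C) (hC3 : C ⊆ H3) :
    hConvexHull C =
      ⋃ (v₀ ∈ C) (v₁ ∈ C) (v₂ ∈ C) (v₃ ∈ C), hConvexHull {v₀, v₁, v₂, v₃} := by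
  classical
  apply Set.Subset.antisymm
  · rw [hConvexHull_eq_image hC3]
    rintro _ ⟨p, hp, rfl⟩
    have hpD := convexHull_subset_D hC3 p hp
    have hp' := hp
    rw [convexHull_eq_union_convexHull_finite_subsets] at hp'
    simp only [Set.mem_iUnion] at hp'
    obtain ⟨t, htC, hpt⟩ := hp'
    rw [Finset.convexHull_eq] at hpt
    obtain ⟨w, hw0, hw1, hwp⟩ := hpt
    rw [Finset.centerMass_eq_of_sum_1 _ id hw1] at hwp
    simp only [id] at hwp
    obtain ⟨t', ht'sub, ht'card, b, hbnn, hbsum⟩ := conic_reduce t w hw0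
    rw [hwp] at hbsum
    -- sum of b is positive
    have hbnn' : ∀ i ∈ t', 0 ≤ b i := hbnn
    have hm0 : 0 ≤ ∑ i ∈ t', b i := Finset.sum_nonneg hbnn
    have hm : 0 < ∑ i ∈ t', b i := by
      rcases eq_or_lt_of_le hm0 with h | h
      · exfalso
        have hall : ∀ i ∈ t', b i = 0 :=
          (Finset.sum_eq_zero_iff_of_nonneg hbnn).1 h.symm
        have : p = 0 := by
          rw [← hbsum, Finset.sum_eq_zero]
          intro i hi; rw [hall i hi, zero_smul]
        have h3 := hpD.2
        rw [this] at h3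
        norm_num at h3
      · exact h
    -- t' nonempty
    have hne : t'.Nonempty := by
      rcases Finset.eq_empty_or_nonempty t' with h | h
      · exfalso; rw [h] at hm; simp at hm
      · exact h
    obtain ⟨d, hd⟩ := hne
    -- vertices
    set l := t'.toList with hl
    have hlen : l.length ≤ 4 := by rw [hl, Finset.length_toList]; exact ht'card
    set v : ℕ → (Fin 4 → ℝ) := fun i => l.getD i d with hv
    have hvmem : ∀ i, v i ∈ t' := by
      intro i
      by_cases h : i < l.length
      · rw [hv]; simp only
        rw [List.getD_eq_getElem l d h]
        exact Finset.mem_toList.1 (List.getElem_mem h)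
      · push_neg at h
        rw [hv]; simp only
        rw [List.getD_eq_default l d h]
        exact hd
    have hsub : (↑t' : Set (Fin 4 → ℝ)) ⊆ {v 0, v 1, v 2, v 3} := by
      intro x hx
      have hxl : x ∈ l := Finset.mem_toList.2 hx
      obtain ⟨i, hi, hix⟩ := List.getElem_of_mem hxl
      have hvi : v i = x := by rw [hv]; simp only; rw [List.getD_eq_getElem l d hi]; exact hix
      have hi4 : i < 4 := lt_of_lt_of_le hi hlen
      interval_cases i <;> rw [← hvi] <;> simp
    have hVH3 : ({v 0, v 1, v 2, v 3} : Set (Fin 4 → ℝ)) ⊆ H3 := by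
      intro x hx
      simp only [Set.mem_insert_iff, Set.mem_singleton_iff] at hx
      rcases hx with rfl | rfl | rfl | rfl <;> exact hC3 (htC (ht'sub (hvmem _)))
    have hcm : (∑ i ∈ t', b i)⁻¹ • p ∈ convexHull ℝ ({v 0, v 1, v 2, v 3} : Set (Fin 4 → ℝ)) := by
      have h1 : t'.centerMass b id ∈ convexHull ℝ ((↑t' : Set (Fin 4 → ℝ))) :=
        t'.centerMass_mem_convexHull hbnn hm (fun i hi => Finset.mem_coe.2 hi)
      have h2 : t'.centerMass b id = (∑ i ∈ t', b i)⁻¹ • p := by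
        simp only [Finset.centerMass, id]
        rw [hbsum]
      rw [h2] at h1
      exact convexHull_mono hsub h1
    have hfin : hproj p ∈ hConvexHull {v 0, v 1, v 2, v 3} := by
      rw [hConvexHull_eq_image hVH3]
      refine ⟨(∑ i ∈ t', b i)⁻¹ • p, hcm, ?_⟩
      rw [hproj_smul (inv_pos.2 hm)]
    have hCmem : ∀ i, v i ∈ C := fun i => htC (ht'sub (hvmem i))
    simp only [Set.mem_iUnion]
    exact ⟨v 0, hCmem 0, v 1, hCmem 1, v 2, hCmem 2, v 3, hCmem 3, hfin⟩
  · intro z hz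
    simp only [Set.mem_iUnion] at hz
    obtain ⟨v0, h0, v1, h1, v2, h2, v3, h3, hz⟩ := hz
    intro A hA
    refine hz A ⟨?_, hA.2.1, hA.2.2⟩
    intro x hx
    simp only [Set.mem_insert_iff, Set.mem_singleton_iff] at hx
    rcases hx with rfl | rfl | rfl | rfl
    exacts [hA.1 h0, hA.1 h1, hA.1 h2, hA.1 h3]
end
end

section
/- Let $f : X \to M$ be a local isometry of complete Riemannian manifolds, where $X$ is negatively curved and convex (every free homotopy class of loops in $X$ contains a geodesic representative) and the universal cover of $M$ is a Hadamard manifold. Then the induced map $f_* : \pi_1(X) \to \pi_1(M)$ is injective. -/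
/-- `γ` is a local geodesic of speed `v`. -/
def IsLocalGeodesic {Y : Type*} [MetricSpace Y] (γ : ℝ → Y) (v : ℝ) : Prop :=
  ∀ t : ℝ, ∃ ε > 0, ∀ s u : ℝ, |s - t| ≤ ε → |u - t| ≤ ε →
    dist (γ s) (γ u) = v * |s - u|

/-- Two loops (`1`-periodic maps `ℝ → Z`) are freely homotopic. -/
def FreelyHomotopic {Z : Type*} [TopologicalSpace Z] (c₀ c₁ : ℝ → Z) : Prop :=
  ∃ H : ℝ × ℝ → Z, Continuous H ∧ (∀ s t, H (s, t + 1) = H (s, t)) ∧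
    (∀ t, H (0, t) = c₀ t) ∧ (∀ t, H (1, t) = c₁ t)

/-- A loop is nullhomotopic if it is freely homotopic to a constant loop. -/
def LoopNullhomotopic {Z : Type*} [TopologicalSpace Z] (c : ℝ → Z) : Prop :=
  ∃ z : Z, FreelyHomotopic c fun _ => z

lemma FreelyHomotopic.symm' {Z : Type*} [TopologicalSpace Z] {c₀ c₁ : ℝ → Z}
    (h : FreelyHomotopic c₀ c₁) : FreelyHomotopic c₁ c₀ := by
  obtain ⟨H, hc, hp, h0, h1⟩ := h
  refine ⟨fun p => H (1 - p.1, p.2), hc.comp (by fun_prop), fun s t => hp _ t,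
    fun t => by simpa using h1 t, fun t => by simpa using h0 t⟩

lemma FreelyHomotopic.trans' {Z : Type*} [TopologicalSpace Z] {c₀ c₁ c₂ : ℝ → Z}
    (h : FreelyHomotopic c₀ c₁) (h' : FreelyHomotopic c₁ c₂) : FreelyHomotopic c₀ c₂ := by
  obtain ⟨H, hc, hp, h0, h1⟩ := h
  obtain ⟨K, kc, kp, k0, k1⟩ := h'
  refine ⟨fun p => if p.1 ≤ 1/2 then H (2 * p.1, p.2) else K (2 * p.1 - 1, p.2),
    ?_, ?_, ?_, ?_⟩
  · apply Continuous.if_le (hc.comp (by fun_prop)) (kc.comp (by fun_prop))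
      continuous_fst continuous_const
    intro p hp'
    have : (2 : ℝ) * p.1 = 1 := by rw [hp']; norm_num
    simp [this, h1, k0]
  · intro s t
    by_cases hs : s ≤ 1/2 <;> simp [hs, hp, kp]
  · intro t; norm_num [h0]
  · intro t; norm_num [k1]

lemma FreelyHomotopic.map {Z W : Type*} [TopologicalSpace Z] [TopologicalSpace W]
    {c₀ c₁ : ℝ → Z} (g : Z → W) (hg : Continuous g)
    (h : FreelyHomotopic c₀ c₁) : FreelyHomotopic (g ∘ c₀) (g ∘ c₁) := by
  obtain ⟨H, hc, hp, h0, h1⟩ := h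
  exact ⟨g ∘ H, hg.comp hc, fun s t => by simp [Function.comp, hp],
    fun t => by simp [Function.comp, h0], fun t => by simp [Function.comp, h1]⟩

/-- Let `f : X → M` be a local isometry, where `X` is convex
(every free homotopy class of loops in `X` contains a closed geodesic
representative) and the universal cover of `M` is a Hadamard manifold (encoded
by Cartan–Hadamard: every nullhomotopic closed geodesic in `M` is constant).
Then the induced map on fundamental groups is injective: a loop in `X` whose
image is nullhomotopic is already nullhomotopic. -/
theorem pi1_injective_of_local_isometry_convex
    {X M : Type*} [MetricSpace X] [MetricSpace M] (f : X → M)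
    (hf : ∀ x : X, ∃ ε > 0, ∀ a b : X, dist a x < ε → dist b x < ε →
      dist (f a) (f b) = dist a b)
    (hXconv : ∀ c : ℝ → X, Continuous c → (∀ t, c (t + 1) = c t) →
      ∃ (ξ : ℝ → X) (v : ℝ), IsLocalGeodesic ξ v ∧ (∀ t, ξ (t + 1) = ξ t) ∧
        FreelyHomotopic c ξ)
    (hM : ∀ (η : ℝ → M) (v : ℝ), IsLocalGeodesic η v → (∀ t, η (t + 1) = η t) →
      LoopNullhomotopic η → ∀ s t : ℝ, η s = η t) :
    ∀ c : ℝ → X, Continuous c → (∀ t, c (t + 1) = c t) →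
      LoopNullhomotopic (f ∘ c) → LoopNullhomotopic c := by
  intro c hc hcp hnull
  obtain ⟨ξ, v, hξgeo, hξp, hhom⟩ := hXconv c hc hcp
  -- f is continuous
  have hfcont : Continuous f := by
    rw [Metric.continuous_iff]
    intro x δ hδ
    obtain ⟨ε, hε, hiso⟩ := hf x
    refine ⟨min ε δ, lt_min hε hδ, fun a ha => ?_⟩
    have := hiso a x (lt_of_lt_of_le ha (min_le_left _ _)) (by simpa using hε)
    rw [this]; exact lt_of_lt_of_le ha (min_le_right _ _)
  -- f ∘ ξ is a local geodesic
  have hfξ : IsLocalGeodesic (f ∘ ξ) v := by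
    intro t
    obtain ⟨ε, hε, hgeo⟩ := hξgeo t
    obtain ⟨ε', hε', hiso⟩ := hf (ξ t)
    refine ⟨min ε (ε' / (2 * (|v| + 1))), lt_min hε (by positivity), fun s u hs hu => ?_⟩
    have hvpos : (0:ℝ) < |v| + 1 := by positivity
    have key : ∀ r : ℝ, |r - t| ≤ min ε (ε' / (2 * (|v| + 1))) → dist (ξ r) (ξ t) < ε' := by
      intro r hr
      have h1 : dist (ξ r) (ξ t) = v * |r - t| :=
        hgeo r t (le_trans hr (min_le_left _ _)) (by simp [hε.le])
      have h2 : |r - t| ≤ ε' / (2 * (|v| + 1)) := le_trans hr (min_le_right _ _)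
      rw [h1]
      calc v * |r - t| ≤ |v| * |r - t| :=
            mul_le_mul_of_nonneg_right (le_abs_self v) (abs_nonneg _)
        _ ≤ (|v| + 1) * (ε' / (2 * (|v| + 1))) := by
            apply mul_le_mul (by linarith) h2 (abs_nonneg _) (by positivity)
        _ = ε' / 2 := by field_simp
        _ < ε' := by linarith
    have := hiso (ξ s) (ξ u) (key s hs) (key u hu)
    simp only [Function.comp]
    rw [this]
    exact hgeo s u (le_trans hs (min_le_left _ _)) (le_trans hu (min_le_left _ _))
  -- f ∘ ξ is nullhomotopic
  have hnullξ : LoopNullhomotopic (f ∘ ξ) := by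
    obtain ⟨z, hz⟩ := hnull
    exact ⟨z, ((hhom.map f hfcont).symm'.trans' hz).symm'.symm'⟩
  -- Apply hM: f ∘ ξ is constant
  have hconst : ∀ s u : ℝ, (f ∘ ξ) s = (f ∘ ξ) u :=
    hM (f ∘ ξ) v hfξ (fun t => by simp [Function.comp, hξp]) hnullξ
  -- v = 0, hence ξ locally constant
  have hloc : ∀ t : ℝ, ∃ ε > 0, ∀ s : ℝ, |s - t| ≤ ε → ξ s = ξ t := by
    intro t
    obtain ⟨ε, hε, hgeo⟩ := hξgeo t
    obtain ⟨ε', hε', hiso⟩ := hf (ξ t)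
    -- pick δ small
    set δ := min ε (ε' / (2 * (|v| + 1))) with hδdef
    have hδ : 0 < δ := lt_min hε (by positivity)
    have key : ∀ r : ℝ, |r - t| ≤ δ → dist (ξ r) (ξ t) < ε' := by
      intro r hr
      have h1 : dist (ξ r) (ξ t) = v * |r - t| :=
        hgeo r t (le_trans hr (min_le_left _ _)) (by simp [hε.le])
      have h2 : |r - t| ≤ ε' / (2 * (|v| + 1)) := le_trans hr (min_le_right _ _)
      rw [h1]
      calc v * |r - t| ≤ |v| * |r - t| :=
            mul_le_mul_of_nonneg_right (le_abs_self v) (abs_nonneg _)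
        _ ≤ (|v| + 1) * (ε' / (2 * (|v| + 1))) := by
            apply mul_le_mul (by linarith) h2 (abs_nonneg _) (by positivity)
        _ = ε' / 2 := by field_simp
        _ < ε' := by linarith
    -- v * δ = 0
    have hvδ : v * δ = 0 := by
      have habs : |t + δ - t| = δ := by simp [abs_of_nonneg hδ.le]
      have hδε : δ ≤ ε := min_le_left _ _
      have h1 : dist (ξ (t + δ)) (ξ t) = v * |t + δ - t| :=
        hgeo (t + δ) t (by rw [habs]; exact hδε) (by simp [hε.le])
      have h2 : dist (f (ξ (t + δ))) (f (ξ t)) = dist (ξ (t + δ)) (ξ t) :=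
        hiso _ _ (key (t + δ) (le_of_eq habs)) (by simpa using hε')
      have h3 : (f ∘ ξ) (t + δ) = (f ∘ ξ) t := hconst _ _
      simp only [Function.comp] at h3
      rw [h3, dist_self] at h2
      rw [← h2] at h1
      simpa [abs_of_nonneg hδ.le] using h1.symm
    have hv : v = 0 := by
      rcases mul_eq_zero.mp hvδ with h | h
      · exact h
      · exact absurd h hδ.ne'
    refine ⟨δ, hδ, fun s hs => ?_⟩
    have := hgeo s t (le_trans hs (min_le_left _ _)) (by simp [hε.le])
    rw [hv, zero_mul] at this
    exact dist_eq_zero.mp this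
  -- locally constant on ℝ implies constant
  have hξconst : ∀ t : ℝ, ξ t = ξ 0 := by
    have hopen : ∀ z : X, IsOpen {t : ℝ | ξ t = z} := by
      intro z
      rw [Metric.isOpen_iff]
      intro t ht
      obtain ⟨ε, hε, h⟩ := hloc t
      exact ⟨ε, hε, fun s hs => by
        have := h s (le_of_lt (by simpa [Real.dist_eq] using hs))
        simp only [Set.mem_setOf_eq] at ht ⊢
        rw [this, ht]⟩
    intro t
    by_contra hne
    have hcover : Set.univ ⊆ {s : ℝ | ξ s = ξ 0} ∪ {s : ℝ | ξ s ≠ ξ 0} := by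
      intro s _
      by_cases h : ξ s = ξ 0 <;> [left; right] <;> exact h
    have hopen2 : IsOpen {s : ℝ | ξ s ≠ ξ 0} := by
      rw [Metric.isOpen_iff]
      intro u hu
      obtain ⟨ε, hε, h⟩ := hloc u
      exact ⟨ε, hε, fun s hs => by
        have := h s (le_of_lt (by simpa [Real.dist_eq] using hs))
        simp only [Set.mem_setOf_eq] at hu ⊢
        rw [this]; exact hu⟩
    have hpre : IsPreconnected (Set.univ : Set ℝ) := isPreconnected_univ
    obtain ⟨x, hx⟩ := hpre _ _ (hopen (ξ 0)) hopen2 hcover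
      ⟨0, Set.mem_univ 0, rfl⟩ ⟨t, Set.mem_univ t, hne⟩
    exact hx.2.2 hx.2.1
  -- conclude
  obtain ⟨H, Hc, Hp, H0, H1⟩ := hhom
  exact ⟨ξ 0, H, Hc, Hp, H0, fun t => by rw [H1 t, hξconst t]⟩
end
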